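/- arXiv:1911.11754 — 7 statements merged into one kernel-verified Lean document; each statement's English description precedes it below -/
import Mathlib

section
/- Let C ⊆ ℝ^d be a nonempty closed convex cone with C ≠ ℝ^d. Then the collection F(ℝ^d, C) = {A ⊆ ℝ^d : A is closed and A = cl(A + C)} ordered by reverse inclusion ⊇ is a complete lattice, where for any family 𝒜 ⊆ F(ℝ^d, C), inf 𝒜 = cl(⋃_{A ∈ 𝒜} A) and sup 𝒜 = ⋂_{A ∈ 𝒜} A. -/
open Pointwise

/-- `(F(ℝ^d, C), ⊇)` is a complete lattice: for every family `𝒜 ⊆ F(ℝ^d,C)`,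
the closure of the union is again in `F(ℝ^d,C)` and is the infimum (greatest lower bound
with respect to `≤` = `⊇`), and the intersection is in `F(ℝ^d,C)` and is the supremum. -/
theorem stmt0 {d : ℕ}
    (C : Set (EuclideanSpace ℝ (Fin d)))
    (hCne : C.Nonempty) (hCclosed : IsClosed C) (hCconv : Convex ℝ C)
    (hCcone : ∀ c ∈ C, ∀ s : ℝ, 0 ≤ s → s • c ∈ C)
    (hCproper : C ≠ Set.univ)
    (𝒜 : Set (Set (EuclideanSpace ℝ (Fin d))))
    (h𝒜 : ∀ A ∈ 𝒜, IsClosed A ∧ A = closure (A + C)) :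
    (IsClosed (closure (⋃₀ 𝒜)) ∧
      closure (⋃₀ 𝒜) = closure (closure (⋃₀ 𝒜) + C)) ∧
    (∀ A ∈ 𝒜, A ⊆ closure (⋃₀ 𝒜)) ∧
    (∀ L : Set (EuclideanSpace ℝ (Fin d)),
      (IsClosed L ∧ L = closure (L + C)) → (∀ A ∈ 𝒜, A ⊆ L) → closure (⋃₀ 𝒜) ⊆ L) ∧
    (IsClosed (⋂₀ 𝒜) ∧ ⋂₀ 𝒜 = closure (⋂₀ 𝒜 + C)) ∧
    (∀ A ∈ 𝒜, ⋂₀ 𝒜 ⊆ A) ∧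
    (∀ U : Set (EuclideanSpace ℝ (Fin d)),
      (IsClosed U ∧ U = closure (U + C)) → (∀ A ∈ 𝒜, U ⊆ A) → U ⊆ ⋂₀ 𝒜) := by
  have h0 : (0 : EuclideanSpace ℝ (Fin d)) ∈ C := by
    obtain ⟨c, hc⟩ := hCne
    simpa using hCcone c hc 0 le_rfl
  -- X ⊆ closure (X + C)
  have hsub : ∀ X : Set (EuclideanSpace ℝ (Fin d)), X ⊆ closure (X + C) := by
    intro X x hx
    exact subset_closure ⟨x, hx, 0, h0, add_zero x⟩
  -- closure X + C ⊆ closure (X + C)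
  have hcl : ∀ X : Set (EuclideanSpace ℝ (Fin d)),
      closure X + C ⊆ closure (X + C) := by
    rintro X z ⟨x, hx, c, hc, rfl⟩
    exact map_mem_closure₂ continuous_add hx (subset_closure hc)
      (fun a ha b hb => Set.add_mem_add ha hb)
  refine ⟨⟨isClosed_closure, ?_⟩, ?_, ?_, ⟨?_, ?_⟩, ?_, ?_⟩
  · -- closure (⋃₀ 𝒜) = closure (closure (⋃₀ 𝒜) + C)
    apply subset_antisymm (hsub _)
    have h1 : closure (⋃₀ 𝒜) + C ⊆ closure (⋃₀ 𝒜 + C) := hcl _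
    have h2 : ⋃₀ 𝒜 + C ⊆ closure (⋃₀ 𝒜) := by
      rintro z ⟨a, ha, c, hc, rfl⟩
      obtain ⟨A, hA, haA⟩ := ha
      have : a + c ∈ closure (A + C) := subset_closure ⟨a, haA, c, hc, rfl⟩
      rw [← (h𝒜 A hA).2] at this
      exact subset_closure ⟨A, hA, this⟩
    calc closure (closure (⋃₀ 𝒜) + C) ⊆ closure (closure (⋃₀ 𝒜 + C)) :=
          closure_mono h1
      _ = closure (⋃₀ 𝒜 + C) := closure_closure
      _ ⊆ closure (⋃₀ 𝒜) := closure_minimal h2 isClosed_closure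
  · exact fun A hA => (Set.subset_sUnion_of_mem hA).trans subset_closure
  · intro L ⟨hLc, _⟩ hAL
    exact closure_minimal (Set.sUnion_subset hAL) hLc
  · exact isClosed_sInter fun A hA => (h𝒜 A hA).1
  · -- ⋂₀ 𝒜 = closure (⋂₀ 𝒜 + C)
    apply subset_antisymm (hsub _)
    intro x hx
    rw [Set.mem_sInter]
    intro A hA
    have : closure (⋂₀ 𝒜 + C) ⊆ closure (A + C) :=
      closure_mono (Set.add_subset_add_right (Set.sInter_subset_of_mem hA))
    rw [← (h𝒜 A hA).2] at this
    exact this hx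
  · exact fun A hA => Set.sInter_subset_of_mem hA
  · intro U _ hUA
    exact Set.subset_sInter hUA
end

section
/- Let C ⊆ ℝ^d be a nonempty closed convex cone with C ≠ ℝ^d, and let ζ ∈ C⁺ \ {0}, where C⁺ = {ζ : ∀ z ∈ C, ζ·z ≥ 0}. For A, B ∈ F(ℝ^d, C), the ζ-difference A −_ζ B := {z ∈ ℝ^d : z + B ⊆ cl(A + H⁺(ζ))}, where H⁺(ζ) = {z : ζ·z ≥ 0}, satisfies A −_ζ B = {z ∈ ℝ^d : ζ·z + inf_{b ∈ B} ζ·b ≥ inf_{a ∈ A} ζ·a} (with the convention on extended reals for the infima, and assuming A, B nonempty). -/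
open Pointwise Filter Topology

/-!
For a nonzero continuous functional `f` and `m = inf f(A)` (in `EReal`), the set `A + {f ≥ 0}`
lies between the open half-space `{f > m}` and the closed one `{f ≥ m}`, so its closure is
`{f ≥ m}`. Hence `z + b ∈ cl(A + H⁺(ζ))` for all `b ∈ B` says `m ≤ ζ·z + ζ·b` for all `b ∈ B`,
i.e. `m ≤ ζ·z + inf ζ(B)`, since adding a real number commutes with infima in `EReal`.
-/

namespace EReal

theorem le_coe_add_sInf_iff {s : EReal} {t : ℝ} {S : Set EReal} :
    s ≤ t + sInf S ↔ ∀ y ∈ S, s ≤ t + y := by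
  have hsub {y : EReal} : s - t ≤ y ↔ s ≤ t + y := by
    rw [sub_le_iff_le_add (.inl (coe_ne_bot t)) (.inl (coe_ne_top t)), add_comm]
  simp only [← hsub, le_sInf_iff]

end EReal

section Halfspace

variable {E : Type*} [AddCommGroup E] [Module ℝ E] [TopologicalSpace E]
  (f : E →L[ℝ] ℝ) (A : Set E)

theorem mem_add_setOf_nonneg_of_sInf_lt {y : E}
    (hy : sInf ((fun a => (f a : EReal)) '' A) < f y) : y ∈ A + {w | 0 ≤ f w} := by
  obtain ⟨_, ⟨a, ha, rfl⟩, hlt⟩ := sInf_lt_iff.mp hy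
  refine ⟨a, ha, y - a, ?_, add_sub_cancel a y⟩
  simpa [sub_nonneg] using (EReal.coe_lt_coe_iff.mp hlt).le

theorem closure_add_setOf_nonneg [ContinuousAdd E] [ContinuousSMul ℝ E] (hf : f ≠ 0) :
    closure (A + {w | 0 ≤ f w}) = {x | sInf ((fun a => (f a : EReal)) '' A) ≤ f x} := by
  set s := sInf ((fun a => (f a : EReal)) '' A)
  apply Set.Subset.antisymm
  · refine closure_minimal ?_
      (isClosed_le continuous_const (continuous_coe_real_ereal.comp f.continuous))
    rintro _ ⟨a, ha, w, hw, rfl⟩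
    calc s ≤ f a := sInf_le ⟨a, ha, rfl⟩
      _ ≤ f (a + w) := EReal.coe_le_coe_iff.mpr (by simpa using hw)
  · intro x hx
    obtain ⟨v, hv⟩ : ∃ v, f v = 1 := by
      obtain ⟨u, hu⟩ := DFunLike.ne_iff.mp hf
      exact ⟨(f u)⁻¹ • u, by simp [inv_mul_cancel₀ hu]⟩
    have hlim : Tendsto (fun t : ℝ => x + t • v) (𝓝[>] 0) (𝓝 x) :=
      tendsto_nhdsWithin_of_tendsto_nhds <|
        (by fun_prop : Continuous fun t : ℝ => x + t • v).tendsto' 0 x (by simp)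
    refine mem_closure_of_tendsto hlim (eventually_nhdsWithin_of_forall fun t (ht : 0 < t) => ?_)
    apply mem_add_setOf_nonneg_of_sInf_lt
    refine lt_of_le_of_lt hx (EReal.coe_lt_coe_iff.mpr ?_)
    simpa [hv] using ht

end Halfspace

theorem stmt1_general {d : ℕ}
    (ζ : EuclideanSpace ℝ (Fin d))
    (hζ0 : ζ ≠ 0)
    (A B : Set (EuclideanSpace ℝ (Fin d))) :
    {z : EuclideanSpace ℝ (Fin d) |
        ∀ b ∈ B, z + b ∈ closure (A + {w : EuclideanSpace ℝ (Fin d) | 0 ≤ (inner ℝ ζ w : ℝ)})} =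
    {z : EuclideanSpace ℝ (Fin d) |
        sInf ((fun a => ((inner ℝ ζ a : ℝ) : EReal)) '' A) ≤
          ((inner ℝ ζ z : ℝ) : EReal) + sInf ((fun b => ((inner ℝ ζ b : ℝ) : EReal)) '' B)} := by
  have hζ : innerSL ℝ ζ ≠ 0 := by
    rwa [← norm_ne_zero_iff, innerSL_apply_norm, norm_ne_zero_iff]
  have hclosure := closure_add_setOf_nonneg (innerSL ℝ ζ) A hζ
  simp only [innerSL_apply_apply] at hclosure
  ext z
  simp only [Set.mem_ofPred_eq, hclosure, EReal.le_coe_add_sInf_iff, Set.forall_mem_image,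
    inner_add_right, EReal.coe_add]

/-- for `ζ ∈ C⁺ \ {0}` and nonempty `A, B ∈ F(ℝ^d, C)`, the ζ-difference
`A −_ζ B = {z : z + B ⊆ cl(A + H⁺(ζ))}` coincides with
`{z : ζ·z + inf_{b∈B} ζ·b ≥ inf_{a∈A} ζ·a}` (infima in the extended reals). -/
theorem stmt1 {d : ℕ}
    (C : Set (EuclideanSpace ℝ (Fin d)))
    (hCne : C.Nonempty) (hCclosed : IsClosed C) (hCconv : Convex ℝ C)
    (hCcone : ∀ c ∈ C, ∀ s : ℝ, 0 ≤ s → s • c ∈ C)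
    (hCproper : C ≠ Set.univ)
    (ζ : EuclideanSpace ℝ (Fin d))
    (hζC : ∀ c ∈ C, 0 ≤ (inner ℝ ζ c : ℝ)) (hζ0 : ζ ≠ 0)
    (A B : Set (EuclideanSpace ℝ (Fin d)))
    (hAne : A.Nonempty) (hBne : B.Nonempty)
    (hA : IsClosed A ∧ A = closure (A + C))
    (hB : IsClosed B ∧ B = closure (B + C)) :
    {z : EuclideanSpace ℝ (Fin d) |
        ∀ b ∈ B, z + b ∈ closure (A + {w : EuclideanSpace ℝ (Fin d) | 0 ≤ (inner ℝ ζ w : ℝ)})} =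
    {z : EuclideanSpace ℝ (Fin d) |
        sInf ((fun a => ((inner ℝ ζ a : ℝ) : EReal)) '' A) ≤
          ((inner ℝ ζ z : ℝ) : EReal) + sInf ((fun b => ((inner ℝ ζ b : ℝ) : EReal)) '' B)} :=
  stmt1_general ζ hζ0 A B
end

section
/- Let 𝒳 be an affine subset of a vector space X with direction subspace X₀, J: 𝒳 → ℝ^d, C ⊆ ℝ^d a nonempty closed convex cone with C ≠ ℝ^d, and J̄(y) = J(y) + C. If M ⊆ 𝒳 is an infimizer, i.e., cl ⋃_{y∈M} J̄(y) = cl ⋃_{y∈𝒳} J̄(y), then for every ζ ∈ C⁺ \ {0}, the point 0 ∈ X₀ is a minimizer of φ_{ζ,M}(v) = inf_{y∈M} ζ·J(y+v) over X₀. -/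
open Pointwise

/-!
Every value `ζ·J(y + v)` with `y ∈ M` is the image under the continuous functional `ζ·` of the
point `J(y + v) ∈ J̄(y + v)`, which lies in `cl ⋃_{y ∈ M} J̄(y)` because `M` is an infimizer.
Since `ζ ∈ C⁺`, the functional is bounded below by `inf_{y ∈ M} ζ·J(y)` on every `J̄(y)` with
`y ∈ M`, hence on their union and, being continuous, on its closure.
-/

theorem zero_mem_of_smul_mem {E : Type*} [AddCommMonoid E] [Module ℝ E] {C : Set E}
    (hCne : C.Nonempty) (hCcone : ∀ c ∈ C, ∀ s : ℝ, 0 ≤ s → s • c ∈ C) : (0 : E) ∈ C := by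
  obtain ⟨c, hc⟩ := hCne
  simpa using hCcone c hc 0 le_rfl

theorem self_mem_singleton_add {E : Type*} [AddZeroClass E] {C : Set E} (h0 : (0 : E) ∈ C)
    (x : E) : x ∈ {x} + C :=
  ⟨x, rfl, 0, h0, add_zero x⟩

section InnerProductSpace

variable {E ι : Type*} [NormedAddCommGroup E] [InnerProductSpace ℝ E]

theorem sInf_inner_le_inner_of_mem_iUnion_add {C : Set E} {ζ : E}
    (hζ : ∀ c ∈ C, 0 ≤ (inner ℝ ζ c : ℝ)) (f : ι → E) (M : Set ι) {x : E}
    (hx : x ∈ ⋃ y ∈ M, ({f y} + C)) :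
    sInf ((fun y => ((inner ℝ ζ (f y) : ℝ) : EReal)) '' M) ≤ ((inner ℝ ζ x : ℝ) : EReal) := by
  simp only [Set.mem_iUnion] at hx
  obtain ⟨y, hy, _, rfl, c, hc, rfl⟩ := hx
  have hle : (inner ℝ ζ (f y) : ℝ) ≤ inner ℝ ζ (f y + c) := by
    rw [inner_add_right]
    linarith [hζ c hc]
  exact (sInf_le (Set.mem_image_of_mem _ hy)).trans (EReal.coe_le_coe_iff.mpr hle)

theorem sInf_inner_le_inner_of_mem_closure_iUnion_add {C : Set E} {ζ : E}
    (hζ : ∀ c ∈ C, 0 ≤ (inner ℝ ζ c : ℝ)) (f : ι → E) (M : Set ι) {x : E}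
    (hx : x ∈ closure (⋃ y ∈ M, ({f y} + C))) :
    sInf ((fun y => ((inner ℝ ζ (f y) : ℝ) : EReal)) '' M) ≤ ((inner ℝ ζ x : ℝ) : EReal) := by
  set a := sInf ((fun y => ((inner ℝ ζ (f y) : ℝ) : EReal)) '' M)
  have hclosed : IsClosed {z : E | a ≤ ((inner ℝ ζ z : ℝ) : EReal)} :=
    isClosed_le continuous_const
      (continuous_coe_real_ereal.comp (continuous_const.inner continuous_id))
  exact closure_minimal (fun _ hz => sInf_inner_le_inner_of_mem_iUnion_add hζ f M hz) hclosed hx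

end InnerProductSpace

theorem stmt7_general {d : ℕ} {X : Type*} [AddCommGroup X] [Module ℝ X]
    (C : Set (EuclideanSpace ℝ (Fin d)))
    (hCne : C.Nonempty)
    (hCcone : ∀ c ∈ C, ∀ s : ℝ, 0 ≤ s → s • c ∈ C)
    (X0 : Submodule ℝ X) (𝒳 : Set X)
    (h𝒳add : ∀ y ∈ 𝒳, ∀ v ∈ X0, y + v ∈ 𝒳)
    (J : X → EuclideanSpace ℝ (Fin d))
    (M : Set X) (hM : M ⊆ 𝒳)
    (hinf : closure (⋃ y ∈ M, ({J y} + C)) = closure (⋃ y ∈ 𝒳, ({J y} + C))) :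
    ∀ ζ : EuclideanSpace ℝ (Fin d), (∀ c ∈ C, 0 ≤ (inner ℝ ζ c : ℝ)) → ζ ≠ 0 →
      ∀ v ∈ X0,
        sInf ((fun y => ((inner ℝ ζ (J y) : ℝ) : EReal)) '' M) ≤
          sInf ((fun y => ((inner ℝ ζ (J (y + v)) : ℝ) : EReal)) '' M) := by
  intro ζ hζ _ v hv
  refine le_sInf ?_
  rintro _ ⟨y, hy, rfl⟩
  have hmem : J (y + v) ∈ closure (⋃ y ∈ M, ({J y} + C)) := by
    rw [hinf]
    refine subset_closure (Set.mem_biUnion (h𝒳add y (hM hy) v hv) ?_)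
    exact self_mem_singleton_add (zero_mem_of_smul_mem hCne hCcone) _
  exact sInf_inner_le_inner_of_mem_closure_iUnion_add hζ J M hmem

/-- Lemma 3.1, first part: if `M ⊆ 𝒳` is an infimizer, i.e.
`cl ⋃_{y∈M} (J(y)+C) = cl ⋃_{y∈𝒳} (J(y)+C)`, then for every `ζ ∈ C⁺ \ {0}` the point
`0 ∈ X₀` minimizes `φ_{ζ,M}(v) = inf_{y∈M} ζ·J(y+v)` over the direction subspace `X₀`. -/
theorem stmt7 {d : ℕ} {X : Type*} [AddCommGroup X] [Module ℝ X]
    (C : Set (EuclideanSpace ℝ (Fin d)))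
    (hCne : C.Nonempty) (hCclosed : IsClosed C) (hCconv : Convex ℝ C)
    (hCcone : ∀ c ∈ C, ∀ s : ℝ, 0 ≤ s → s • c ∈ C)
    (hCproper : C ≠ Set.univ)
    (X0 : Submodule ℝ X) (𝒳 : Set X)
    (h𝒳add : ∀ y ∈ 𝒳, ∀ v ∈ X0, y + v ∈ 𝒳)
    (h𝒳sub : ∀ y₁ ∈ 𝒳, ∀ y₂ ∈ 𝒳, y₁ - y₂ ∈ X0)
    (J : X → EuclideanSpace ℝ (Fin d))
    (M : Set X) (hM : M ⊆ 𝒳) (hMne : M.Nonempty)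
    (hinf : closure (⋃ y ∈ M, ({J y} + C)) = closure (⋃ y ∈ 𝒳, ({J y} + C))) :
    ∀ ζ : EuclideanSpace ℝ (Fin d), (∀ c ∈ C, 0 ≤ (inner ℝ ζ c : ℝ)) → ζ ≠ 0 →
      ∀ v ∈ X0,
        sInf ((fun y => ((inner ℝ ζ (J y) : ℝ) : EReal)) '' M) ≤
          sInf ((fun y => ((inner ℝ ζ (J (y + v)) : ℝ) : EReal)) '' M) :=
  stmt7_general C hCne hCcone X0 𝒳 h𝒳add J M hM hinf
end

section
/- Let 𝒳 be an affine subset of a vector space X with direction subspace X₀, J: 𝒳 → ℝ^d, C ⊆ ℝ^d a nonempty closed convex cone with C ≠ ℝ^d, and suppose the set-valued map y ↦ J(y) + C is convex and M ⊆ 𝒳 is nonempty convex. If for every ζ ∈ C⁺ \ {0}, the point 0 minimizes v ↦ inf_{y∈M} ζ·J(y+v) over X₀, then M is an infimizer: cl co ⋃_{y∈M}(J(y)+C) ⊇ {J(y) : y ∈ 𝒳}. -/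
/-!
Suppose `J y ∉ S := cl co ⋃_{y' ∈ M} (J y' + C)` for some `y ∈ 𝒳`. Strictly separating `J y`
from the closed convex set `S` gives `ζ` and `u` with `⟪ζ, J y⟫ < u < ⟪ζ, s⟫` on `S`. Since `S`
contains the rays `J y₀ + t • c` (`c ∈ C`, `t ≥ 0`), `ζ` lies in `C⁺`, and `ζ ≠ 0`. Minimality of
`0` at the shift `v = y - y₀ ∈ X₀` then yields
`u ≤ inf_{y' ∈ M} ⟪ζ, J y'⟫ ≤ inf_{y' ∈ M} ⟪ζ, J (y' + v)⟫ ≤ ⟪ζ, J y⟫`, a contradiction.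
-/

open Pointwise
open scoped RealInnerProductSpace

section Separation

variable {E : Type*} [NormedAddCommGroup E] [InnerProductSpace ℝ E]

theorem exists_inner_lt_of_notMem_of_isClosed_of_convex [CompleteSpace E] {S : Set E}
    (hconv : Convex ℝ S) (hclosed : IsClosed S) {x : E} (hx : x ∉ S) :
    ∃ ζ : E, ∃ u : ℝ, ⟪ζ, x⟫ < u ∧ ∀ s ∈ S, u < ⟪ζ, s⟫ := by
  obtain ⟨f, u, hfx, hfS⟩ := geometric_hahn_banach_point_closed hconv hclosed hx
  refine ⟨(InnerProductSpace.toDual ℝ E).symm f, u, ?_, fun s hs => ?_⟩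
  · rwa [InnerProductSpace.toDual_symm_apply]
  · rw [InnerProductSpace.toDual_symm_apply]
    exact hfS s hs

theorem inner_nonneg_of_forall_lt_inner_add_smul {ζ a c : E} {u : ℝ}
    (h : ∀ t : ℝ, 0 ≤ t → u < ⟪ζ, a + t • c⟫) : 0 ≤ ⟪ζ, c⟫ := by
  by_contra! hc
  have ha : u < ⟪ζ, a⟫ := by simpa using h 0 le_rfl
  -- at this `t` the ray reaches the level `u` exactly
  have ht := h ((⟪ζ, a⟫ - u) / -⟪ζ, c⟫) (div_nonneg (by linarith) (by linarith))
  rw [inner_add_right, real_inner_smul_right, div_mul_eq_mul_div, div_neg,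
    mul_div_cancel_right₀ _ hc.ne] at ht
  linarith

end Separation

theorem le_of_forall_le_of_sInf_image_le {X : Type*} {M : Set X} {g h : X → ℝ} {u : ℝ}
    (hu : ∀ y ∈ M, u ≤ g y)
    (hle : sInf ((fun y => (g y : EReal)) '' M) ≤ sInf ((fun y => (h y : EReal)) '' M))
    {y₀ : X} (hy₀ : y₀ ∈ M) : u ≤ h y₀ := by
  have hlb : (u : EReal) ≤ sInf ((fun y => (g y : EReal)) '' M) := by
    refine le_sInf ?_
    rintro _ ⟨y, hy, rfl⟩
    exact EReal.coe_le_coe_iff.mpr (hu y hy)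
  exact EReal.coe_le_coe_iff.mp <| hlb.trans <| hle.trans <| sInf_le ⟨y₀, hy₀, rfl⟩

theorem stmt8_general {d : ℕ} {X : Type*} [AddCommGroup X] [Module ℝ X]
    (C : Set (EuclideanSpace ℝ (Fin d)))
    (hCne : C.Nonempty)
    (hCcone : ∀ c ∈ C, ∀ s : ℝ, 0 ≤ s → s • c ∈ C)
    (X0 : Submodule ℝ X) (𝒳 : Set X)
    (h𝒳sub : ∀ y₁ ∈ 𝒳, ∀ y₂ ∈ 𝒳, y₁ - y₂ ∈ X0)
    (J : X → EuclideanSpace ℝ (Fin d))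
    (M : Set X) (hM : M ⊆ 𝒳) (hMne : M.Nonempty)
    (hmin : ∀ ζ : EuclideanSpace ℝ (Fin d), (∀ c ∈ C, 0 ≤ (inner ℝ ζ c : ℝ)) → ζ ≠ 0 →
      ∀ v ∈ X0,
        sInf ((fun y => ((inner ℝ ζ (J y) : ℝ) : EReal)) '' M) ≤
          sInf ((fun y => ((inner ℝ ζ (J (y + v)) : ℝ) : EReal)) '' M)) :
    ∀ y ∈ 𝒳, J y ∈ closure (convexHull ℝ (⋃ y' ∈ M, ({J y'} + C))) := by
  intro y hy
  by_contra hnot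
  obtain ⟨ζ, u, hζy, hζS⟩ := exists_inner_lt_of_notMem_of_isClosed_of_convex
    (convex_convexHull ℝ _).closure isClosed_closure hnot
  have hmemS (y' : X) (hy' : y' ∈ M) (c : EuclideanSpace ℝ (Fin d)) (hc : c ∈ C) :
      J y' + c ∈ closure (convexHull ℝ (⋃ y' ∈ M, ({J y'} + C))) :=
    subset_closure <| subset_convexHull ℝ _ <|
      Set.mem_iUnion₂.2 ⟨y', hy', Set.add_mem_add (Set.mem_singleton _) hc⟩
  obtain ⟨c₀, hc₀⟩ := hCne
  have h0C : (0 : EuclideanSpace ℝ (Fin d)) ∈ C := by simpa using hCcone c₀ hc₀ 0 le_rfl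
  have hζJ (y' : X) (hy' : y' ∈ M) : u ≤ ⟪ζ, J y'⟫ := by
    simpa using (hζS _ (hmemS y' hy' 0 h0C)).le
  obtain ⟨y₀, hy₀⟩ := hMne
  have hdual (c : EuclideanSpace ℝ (Fin d)) (hc : c ∈ C) : 0 ≤ ⟪ζ, c⟫ :=
    inner_nonneg_of_forall_lt_inner_add_smul fun t ht => hζS _ (hmemS y₀ hy₀ _ (hCcone c hc t ht))
  have hζne : ζ ≠ 0 := by
    rintro rfl
    simp only [inner_zero_left] at hζy hζJ
    linarith [hζJ y₀ hy₀]
  have hle := hmin ζ hdual hζne (y - y₀) (h𝒳sub y hy y₀ (hM hy₀))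
  have hyJ := le_of_forall_le_of_sInf_image_le hζJ hle hy₀
  rw [add_sub_cancel] at hyJ
  linarith

/-- Lemma 3.1, second part: if `y ↦ J(y)+C` is convex on the affine set `𝒳`,
`M ⊆ 𝒳` is nonempty and convex, and for every `ζ ∈ C⁺ \ {0}` the point `0` minimizes
`v ↦ inf_{y∈M} ζ·J(y+v)` over `X₀`, then `M` is an infimizer:
`cl co ⋃_{y∈M} (J(y)+C) ⊇ {J(y) : y ∈ 𝒳}`. -/
theorem stmt8 {d : ℕ} {X : Type*} [AddCommGroup X] [Module ℝ X]
    (C : Set (EuclideanSpace ℝ (Fin d)))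
    (hCne : C.Nonempty) (hCclosed : IsClosed C) (hCconv : Convex ℝ C)
    (hCcone : ∀ c ∈ C, ∀ s : ℝ, 0 ≤ s → s • c ∈ C)
    (hCproper : C ≠ Set.univ)
    (X0 : Submodule ℝ X) (𝒳 : Set X)
    (h𝒳add : ∀ y ∈ 𝒳, ∀ v ∈ X0, y + v ∈ 𝒳)
    (h𝒳sub : ∀ y₁ ∈ 𝒳, ∀ y₂ ∈ 𝒳, y₁ - y₂ ∈ X0)
    (J : X → EuclideanSpace ℝ (Fin d))
    (hJconv : Convex ℝ {p : X × EuclideanSpace ℝ (Fin d) | p.1 ∈ 𝒳 ∧ p.2 ∈ {J p.1} + C})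
    (M : Set X) (hM : M ⊆ 𝒳) (hMne : M.Nonempty) (hMconv : Convex ℝ M)
    (hmin : ∀ ζ : EuclideanSpace ℝ (Fin d), (∀ c ∈ C, 0 ≤ (inner ℝ ζ c : ℝ)) → ζ ≠ 0 →
      ∀ v ∈ X0,
        sInf ((fun y => ((inner ℝ ζ (J y) : ℝ) : EReal)) '' M) ≤
          sInf ((fun y => ((inner ℝ ζ (J (y + v)) : ℝ) : EReal)) '' M)) :
    ∀ y ∈ 𝒳, J y ∈ closure (convexHull ℝ (⋃ y' ∈ M, ({J y'} + C))) :=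
  stmt8_general C hCne hCcone X0 𝒳 h𝒳sub J M hM hMne hmin
end

section
/- Let 𝒳₁ = {y ∈ W^{1,q}([a,b]; ℝⁿ) : y(a) = A, y(b) = B} with 1 < q < ∞, L: [a,b] × ℝ^{2n} → ℝ^d continuous with |L_i(t,y,p)| ≤ K₁(|y|^q + |p|^q + 1) for each component, J(y) = ∫_a^b L(t, y(t), ẏ(t)) dt, and C ⊆ ℝ^d a nonempty closed convex cone with C ≠ ℝ^d. Suppose that for every ζ in a base B of C⁺ there exists y_ζ ∈ 𝒳₁ with ζ·J(y_ζ) = inf_{y∈𝒳₁} ζ·J(y). Then M = {y_ζ : ζ ∈ B} satisfies cl co ⋃_{y∈M}(J(y) + C) = cl co ⋃_{y∈𝒳₁}(J(y) + C), i.e., M is an infimizer. -/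
open Pointwise MeasureTheory

/-! Let `T` be the closed convex hull of `⋃_{ζ ∈ B} (J(y_ζ) + C)`. It is closed, convex and
contains a translate of the cone `C`, so a point outside `T` is strictly separated from it by a
functional that is bounded below on that translate, hence nonnegative on `C`: a nonzero element
of `C⁺`. Rescaled into the base it becomes some `ζ ∈ B`, and the `ζ`-minimality of `y_ζ` places
every `J(y) + c` with `y ∈ 𝒳₁`, `c ∈ C` on the side of `T`. -/

/-- An arc in the Sobolev space `W^{1,q}([a,b]; ℝⁿ)`, represented by its continuous
representative `y` together with its weak derivative `dy ∈ L^q`, linked by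
`y(t) = y(a) + ∫_a^t dy`. -/
structure SobolevArc (q : ℝ) (a b : ℝ) (n : ℕ) where
  y : ℝ → EuclideanSpace ℝ (Fin n)
  dy : ℝ → EuclideanSpace ℝ (Fin n)
  mem_lp : MemLp dy (ENNReal.ofReal q) (volume.restrict (Set.Icc a b))
  rep : ∀ t ∈ Set.Icc a b, y t = y a + ∫ s in a..t, dy s

section ConeSeparation

variable {E : Type*}

theorem nonneg_of_lt_apply_add_of_cone [AddCommGroup E] [Module ℝ E]
    {C : Set E} (hCcone : ∀ c ∈ C, ∀ s : ℝ, 0 ≤ s → s • c ∈ C) (f : E →ₗ[ℝ] ℝ)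
    {u : ℝ} {v : E} (hf : ∀ c ∈ C, u < f (v + c)) {c : E} (hc : c ∈ C) : 0 ≤ f c := by
  by_contra! hneg
  set s := |f v - u| / -f c
  have hs : 0 ≤ s := div_nonneg (abs_nonneg _) (by linarith)
  have hsc : s * f c = -|f v - u| := by
    rw [div_mul_eq_mul_div, div_neg, mul_div_assoc, div_self hneg.ne, mul_one]
  have := hf _ (hCcone c hc s hs)
  rw [map_add, map_smul, smul_eq_mul, hsc] at this
  linarith [le_abs_self (f v - u)]

variable [NormedAddCommGroup E] [InnerProductSpace ℝ E] [CompleteSpace E]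

theorem exists_mem_dualCone_inner_lt_of_notMem {C T : Set E}
    (hCcone : ∀ c ∈ C, ∀ s : ℝ, 0 ≤ s → s • c ∈ C) (hCne : C.Nonempty)
    (hTconv : Convex ℝ T) (hTclosed : IsClosed T) {v : E} (hv : ∀ c ∈ C, v + c ∈ T)
    {x : E} (hx : x ∉ T) :
    ∃ ζ ∈ {ξ : E | ∀ c ∈ C, 0 ≤ (inner ℝ ξ c : ℝ)} \ {0},
      ∀ t ∈ T, (inner ℝ ζ x : ℝ) < inner ℝ ζ t := by
  obtain ⟨f, u, hfx, hfT⟩ := geometric_hahn_banach_point_closed hTconv hTclosed hx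
  set ζ := (InnerProductSpace.toDual ℝ E).symm f
  have hζ : ∀ w, (inner ℝ ζ w : ℝ) = f w := fun _ => InnerProductSpace.toDual_symm_apply
  have hsep : ∀ t ∈ T, (inner ℝ ζ x : ℝ) < inner ℝ ζ t := fun t ht => by
    rw [hζ, hζ]
    exact hfx.trans (hfT t ht)
  refine ⟨ζ, ⟨fun c hc => ?_, fun hζ0 => ?_⟩, hsep⟩
  · rw [hζ]
    exact nonneg_of_lt_apply_add_of_cone hCcone f.toLinearMap (fun c hc => hfT _ (hv c hc)) hc
  · obtain ⟨c, hc⟩ := hCne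
    simpa [show ζ = 0 from hζ0] using hsep _ (hv c hc)

theorem mem_of_forall_dualCone_exists_inner_le {C T : Set E}
    (hCcone : ∀ c ∈ C, ∀ s : ℝ, 0 ≤ s → s • c ∈ C) (hCne : C.Nonempty)
    (hTconv : Convex ℝ T) (hTclosed : IsClosed T) {v : E} (hv : ∀ c ∈ C, v + c ∈ T) {x : E}
    (hx : ∀ ζ ∈ {ξ : E | ∀ c ∈ C, 0 ≤ (inner ℝ ξ c : ℝ)} \ {0},
      ∃ t ∈ T, (inner ℝ ζ t : ℝ) ≤ inner ℝ ζ x) :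
    x ∈ T := by
  by_contra hxT
  obtain ⟨ζ, hζ, hlt⟩ :=
    exists_mem_dualCone_inner_lt_of_notMem hCcone hCne hTconv hTclosed hv hxT
  obtain ⟨t, ht, hle⟩ := hx ζ hζ
  exact (hlt t ht).not_ge hle

theorem nonempty_dualCone_diff_zero {C : Set E}
    (hCcone : ∀ c ∈ C, ∀ s : ℝ, 0 ≤ s → s • c ∈ C) (hCne : C.Nonempty)
    (hCconv : Convex ℝ C) (hCclosed : IsClosed C) (hCproper : C ≠ Set.univ) :
    ({ξ : E | ∀ c ∈ C, 0 ≤ (inner ℝ ξ c : ℝ)} \ {0}).Nonempty := by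
  obtain ⟨z, hz⟩ := (Set.ne_univ_iff_exists_notMem C).mp hCproper
  obtain ⟨ζ, hζ, -⟩ := exists_mem_dualCone_inner_lt_of_notMem hCcone hCne hCconv hCclosed
    (v := 0) (by simp) hz
  exact ⟨ζ, hζ⟩

end ConeSeparation

theorem stmt10_general {n d : ℕ} (q : ℝ) (a b : ℝ)
    (C : Set (EuclideanSpace ℝ (Fin d)))
    (hCclosed : IsClosed C) (hCconv : Convex ℝ C)
    (hCcone : ∀ c ∈ C, ∀ s : ℝ, 0 ≤ s → s • c ∈ C)
    (hCproper : C ≠ Set.univ)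
    (Bse : Set (EuclideanSpace ℝ (Fin d)))
    (hBase : ∀ ζ ∈ ({ξ : EuclideanSpace ℝ (Fin d) | ∀ c ∈ C, 0 ≤ (inner ℝ ξ c : ℝ)} \ {0} :
        Set (EuclideanSpace ℝ (Fin d))),
      ∃! p : ℝ × EuclideanSpace ℝ (Fin d), 0 < p.1 ∧ p.2 ∈ Bse ∧ ζ = p.1 • p.2)
    (X1 : Set (SobolevArc q a b n))
    (J : SobolevArc q a b n → EuclideanSpace ℝ (Fin d))
    (ysel : EuclideanSpace ℝ (Fin d) → SobolevArc q a b n)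
    (hysel : ∀ ζ ∈ Bse, ysel ζ ∈ X1 ∧
      ∀ y ∈ X1, (inner ℝ ζ (J (ysel ζ)) : ℝ) ≤ (inner ℝ ζ (J y) : ℝ)) :
    closure (convexHull ℝ (⋃ y ∈ ysel '' Bse, ({J y} + C))) =
      closure (convexHull ℝ (⋃ y ∈ X1, ({J y} + C))) := by
  set T := closure (convexHull ℝ (⋃ y ∈ ysel '' Bse, ({J y} + C)))
  have hTconv : Convex ℝ T := (convex_convexHull ℝ _).closure
  have hsel_add_mem : ∀ ζ ∈ Bse, ∀ c ∈ C, J (ysel ζ) + c ∈ T := fun ζ hζ c hc =>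
    subset_closure <| subset_convexHull ℝ _ <|
      Set.mem_biUnion (Set.mem_image_of_mem ysel hζ) (Set.add_mem_add rfl hc)
  refine (closure_mono <| convexHull_mono <| Set.biUnion_subset_biUnion_left ?_).antisymm
    (closure_minimal (convexHull_min ?_ hTconv) isClosed_closure)
  · rintro _ ⟨ζ, hζ, rfl⟩
    exact (hysel ζ hζ).1
  · simp only [Set.iUnion_subset_iff]
    rintro y hy _ ⟨_, rfl, c, hc, rfl⟩
    obtain ⟨ζ₀, hζ₀⟩ := nonempty_dualCone_diff_zero hCcone ⟨c, hc⟩ hCconv hCclosed hCproper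
    obtain ⟨⟨_, p₀⟩, ⟨-, hp₀, -⟩, -⟩ := hBase ζ₀ hζ₀
    refine mem_of_forall_dualCone_exists_inner_le hCcone ⟨c, hc⟩ hTconv isClosed_closure
      (hsel_add_mem p₀ hp₀) fun ζ hζ => ?_
    obtain ⟨⟨s, p⟩, ⟨hs, hp, rfl⟩, -⟩ := hBase ζ hζ
    refine ⟨J (ysel p) + c, hsel_add_mem p hp c hc, ?_⟩
    simp only [real_inner_smul_left, inner_add_right]
    gcongr
    exact (hysel p hp).2 y hy

/-- Theorem 4.1: under the growth bound on `L`, if for every `ζ` in a base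
`Bse` of `C⁺` there is a `ζ`-solution `ysel ζ ∈ 𝒳₁`, then `M = {y_ζ : ζ ∈ Bse}` is an
infimizer: `cl co ⋃_{y∈M} (J(y)+C) = cl co ⋃_{y∈𝒳₁} (J(y)+C)`. -/
theorem stmt10 {n d : ℕ} (q : ℝ) (hq : 1 < q) (a b : ℝ) (hab : a < b)
    (A B : EuclideanSpace ℝ (Fin n))
    (L : ℝ → EuclideanSpace ℝ (Fin n) → EuclideanSpace ℝ (Fin n) → EuclideanSpace ℝ (Fin d))
    (hLcont : Continuous fun x : ℝ × EuclideanSpace ℝ (Fin n) × EuclideanSpace ℝ (Fin n) =>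
      L x.1 x.2.1 x.2.2)
    (K₁ : ℝ)
    (hgrowth : ∀ (t : ℝ) (y p : EuclideanSpace ℝ (Fin n)) (i : Fin d),
      |L t y p i| ≤ K₁ * (‖y‖ ^ q + ‖p‖ ^ q + 1))
    (C : Set (EuclideanSpace ℝ (Fin d)))
    (hCne : C.Nonempty) (hCclosed : IsClosed C) (hCconv : Convex ℝ C)
    (hCcone : ∀ c ∈ C, ∀ s : ℝ, 0 ≤ s → s • c ∈ C)
    (hCproper : C ≠ Set.univ)
    (Bse : Set (EuclideanSpace ℝ (Fin d)))
    (hBse : Bse ⊆ {ξ : EuclideanSpace ℝ (Fin d) | ∀ c ∈ C, 0 ≤ (inner ℝ ξ c : ℝ)} \ {0})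
    (hBase : ∀ ζ ∈ ({ξ : EuclideanSpace ℝ (Fin d) | ∀ c ∈ C, 0 ≤ (inner ℝ ξ c : ℝ)} \ {0} :
        Set (EuclideanSpace ℝ (Fin d))),
      ∃! p : ℝ × EuclideanSpace ℝ (Fin d), 0 < p.1 ∧ p.2 ∈ Bse ∧ ζ = p.1 • p.2)
    (X1 : Set (SobolevArc q a b n))
    (hX1 : X1 = {y : SobolevArc q a b n | y.y a = A ∧ y.y b = B})
    (J : SobolevArc q a b n → EuclideanSpace ℝ (Fin d))
    (hJ : ∀ y : SobolevArc q a b n, J y = ∫ t in a..b, L t (y.y t) (y.dy t))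
    (ysel : EuclideanSpace ℝ (Fin d) → SobolevArc q a b n)
    (hysel : ∀ ζ ∈ Bse, ysel ζ ∈ X1 ∧
      ∀ y ∈ X1, (inner ℝ ζ (J (ysel ζ)) : ℝ) ≤ (inner ℝ ζ (J y) : ℝ)) :
    closure (convexHull ℝ (⋃ y ∈ ysel '' Bse, ({J y} + C))) =
      closure (convexHull ℝ (⋃ y ∈ X1, ({J y} + C))) :=
  stmt10_general q a b C hCclosed hCconv hCcone hCproper Bse hBase X1 J ysel hysel
end

section
/- For the energy-saving building problem: let A₁, A₂, λ > 0 with λa < A₁ and λa < A₂, and define y₁(t) = (1/λ)(√(A₁² − λ²t²) − √(A₁² − λ²a²)) and y₂(t) = −(1/λ)(√(A₂² − λ²t²) − √(A₂² − λ²a²)) on [−a, a]. Then y₁(±a) = y₂(±a) = 0, and y₁, y₂ satisfy on (−a,a) the Euler–Lagrange system −A₁ ÿ₁/(1+ẏ₁²)^{3/2} − λ = 0 and −A₂ ÿ₂/(1+ẏ₂²)^{3/2} + λ = 0. -/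
/-! The curves are circular arcs: `y₁` is a vertical translate of `t ↦ √(R₁² − t²)` with
`R₁ = A₁/λ`, and `y₂` the reflection of such an arc with `R₂ = A₂/λ`. The signed curvature
`y''/(1 + y'²)^{3/2}` of the upper semicircle of radius `R` is `−1/R`; it is unchanged by
vertical translation and changes sign under reflection, so `−A₁ κ(y₁) = λ` and `−A₂ κ(y₂) = −λ`. -/

open Filter Topology

noncomputable section

def graphCurvature (f : ℝ → ℝ) (t : ℝ) : ℝ :=
  deriv (deriv f) t / (1 + deriv f t ^ 2) ^ ((3 : ℝ) / 2)

theorem graphCurvature_add_const (f : ℝ → ℝ) (c t : ℝ) :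
    graphCurvature (fun x => f x + c) t = graphCurvature f t := by
  simp only [graphCurvature, deriv_add_const']

theorem graphCurvature_neg (f : ℝ → ℝ) (t : ℝ) :
    graphCurvature (-f) t = -graphCurvature f t := by
  simp only [graphCurvature, deriv.neg', deriv.fun_neg, neg_sq, neg_div]

theorem sq_rpow_three_halves {x : ℝ} (hx : 0 ≤ x) : (x ^ 2) ^ ((3 : ℝ) / 2) = x ^ 3 := by
  rw [← Real.rpow_natCast, ← Real.rpow_mul hx]
  norm_num

section Semicircle

variable {R x t : ℝ}

theorem hasDerivAt_sqrt_sq_sub_sq (hx : x ^ 2 < R ^ 2) :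
    HasDerivAt (fun x => √(R ^ 2 - x ^ 2)) (-x / √(R ^ 2 - x ^ 2)) x := by
  have hs : R ^ 2 - x ^ 2 ≠ 0 := (sub_pos.mpr hx).ne'
  convert (((hasDerivAt_pow 2 x).const_sub (R ^ 2)).sqrt hs) using 1
  field_simp
  ring

theorem deriv_sqrt_sq_sub_sq_eventuallyEq (ht : t ^ 2 < R ^ 2) :
    deriv (fun x => √(R ^ 2 - x ^ 2)) =ᶠ[𝓝 t] fun x => -x / √(R ^ 2 - x ^ 2) := by
  have hopen : IsOpen {x : ℝ | x ^ 2 < R ^ 2} := isOpen_lt (by fun_prop) continuous_const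
  filter_upwards [hopen.mem_nhds ht] with x hx
  exact (hasDerivAt_sqrt_sq_sub_sq hx).deriv

theorem hasDerivAt_neg_div_sqrt_sq_sub_sq (ht : t ^ 2 < R ^ 2) :
    HasDerivAt (fun x => -x / √(R ^ 2 - x ^ 2)) (-R ^ 2 / √(R ^ 2 - t ^ 2) ^ 3) t := by
  have hs : 0 < R ^ 2 - t ^ 2 := sub_pos.mpr ht
  have hq : 0 < √(R ^ 2 - t ^ 2) := Real.sqrt_pos.mpr hs
  refine ((hasDerivAt_id' t).neg.div (hasDerivAt_sqrt_sq_sub_sq ht) hq.ne').congr_deriv ?_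
  simp only [Pi.neg_apply]
  field_simp
  rw [Real.sq_sqrt hs.le]
  ring

theorem graphCurvature_sqrt_sq_sub_sq (ht : |t| < R) :
    graphCurvature (fun x => √(R ^ 2 - x ^ 2)) t = -1 / R := by
  have hR : 0 < R := (abs_nonneg t).trans_lt ht
  have ht2 : t ^ 2 < R ^ 2 := sq_lt_sq' (abs_lt.mp ht).1 (abs_lt.mp ht).2
  have hs : 0 < R ^ 2 - t ^ 2 := sub_pos.mpr ht2
  set q := √(R ^ 2 - t ^ 2)
  have hq : 0 < q := Real.sqrt_pos.mpr hs
  have hqq : q ^ 2 = R ^ 2 - t ^ 2 := Real.sq_sqrt hs.le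
  have hd : deriv (fun x => √(R ^ 2 - x ^ 2)) t = -t / q := (hasDerivAt_sqrt_sq_sub_sq ht2).deriv
  have hdd : deriv (deriv fun x => √(R ^ 2 - x ^ 2)) t = -R ^ 2 / q ^ 3 := by
    rw [(deriv_sqrt_sq_sub_sq_eventuallyEq ht2).deriv_eq,
      (hasDerivAt_neg_div_sqrt_sq_sub_sq ht2).deriv]
  have hspeed : 1 + (-t / q) ^ 2 = (R / q) ^ 2 := by
    field_simp
    linear_combination hqq
  rw [graphCurvature, hdd, hd, hspeed, sq_rpow_three_halves (div_pos hR hq).le]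
  field_simp

end Semicircle

theorem inv_mul_sqrt_sq_sub_mul_sq {c : ℝ} (hc : 0 < c) (A t : ℝ) :
    1 / c * √(A ^ 2 - c ^ 2 * t ^ 2) = √((A / c) ^ 2 - t ^ 2) := by
  have hsplit : A ^ 2 - c ^ 2 * t ^ 2 = c ^ 2 * ((A / c) ^ 2 - t ^ 2) := by
    field_simp
  rw [hsplit, Real.sqrt_mul (sq_nonneg c), Real.sqrt_sq hc.le]
  field_simp

theorem graphCurvature_arc {c A t : ℝ} (hc : 0 < c) (ht : c * |t| < A) (C : ℝ) :
    graphCurvature (fun x => 1 / c * (√(A ^ 2 - c ^ 2 * x ^ 2) - C)) t = -c / A := by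
  have hA : 0 < A := (mul_nonneg hc.le (abs_nonneg t)).trans_lt ht
  have harc : (fun x => 1 / c * (√(A ^ 2 - c ^ 2 * x ^ 2) - C))
      = fun x => √((A / c) ^ 2 - x ^ 2) + -(1 / c * C) := by
    funext x
    rw [← inv_mul_sqrt_sq_sub_mul_sq hc]
    ring
  have htR : |t| < A / c := by
    rw [lt_div_iff₀ hc, mul_comm]
    exact ht
  rw [harc, graphCurvature_add_const, graphCurvature_sqrt_sq_sub_sq htR]
  field_simp

end

theorem stmt18_general (a A₁ A₂ lam : ℝ)
    (hlam : 0 < lam)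
    (h1 : lam * a < A₁) (h2 : lam * a < A₂)
    (y₁ y₂ : ℝ → ℝ)
    (hy₁ : ∀ t : ℝ, y₁ t =
      (1 / lam) * (Real.sqrt (A₁ ^ 2 - lam ^ 2 * t ^ 2) - Real.sqrt (A₁ ^ 2 - lam ^ 2 * a ^ 2)))
    (hy₂ : ∀ t : ℝ, y₂ t =
      -(1 / lam) * (Real.sqrt (A₂ ^ 2 - lam ^ 2 * t ^ 2) - Real.sqrt (A₂ ^ 2 - lam ^ 2 * a ^ 2))) :
    y₁ (-a) = 0 ∧ y₁ a = 0 ∧ y₂ (-a) = 0 ∧ y₂ a = 0 ∧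
    ∀ t ∈ Set.Ioo (-a) a,
      (-A₁ * deriv (deriv y₁) t / (1 + (deriv y₁ t) ^ 2) ^ ((3:ℝ)/2) - lam = 0) ∧
      (-A₂ * deriv (deriv y₂) t / (1 + (deriv y₂ t) ^ 2) ^ ((3:ℝ)/2) + lam = 0) := by
  refine ⟨by simp [hy₁], by simp [hy₁], by simp [hy₂], by simp [hy₂], ?_⟩
  intro t ht
  have hta : lam * |t| < lam * a := mul_lt_mul_of_pos_left (abs_lt.mpr ht) hlam
  have hA₁ : 0 < A₁ := (mul_nonneg hlam.le (abs_nonneg t)).trans_lt (hta.trans h1)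
  have hA₂ : 0 < A₂ := (mul_nonneg hlam.le (abs_nonneg t)).trans_lt (hta.trans h2)
  have hκ₁ : graphCurvature y₁ t = -lam / A₁ := by
    rw [funext hy₁, graphCurvature_arc hlam (hta.trans h1)]
  have hκ₂ : graphCurvature y₂ t = lam / A₂ := by
    have hy₂' : y₂ = -fun x => 1 / lam * (√(A₂ ^ 2 - lam ^ 2 * x ^ 2) - √(A₂ ^ 2 - lam ^ 2 * a ^ 2)) :=
      funext fun x => by rw [hy₂, Pi.neg_apply]; ring
    rw [hy₂', graphCurvature_neg, graphCurvature_arc hlam (hta.trans h2), neg_div, neg_neg]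
  rw [mul_div_assoc, mul_div_assoc]
  change -A₁ * graphCurvature y₁ t - lam = 0 ∧ -A₂ * graphCurvature y₂ t + lam = 0
  rw [hκ₁, hκ₂]
  constructor <;> field_simp <;> ring

/-- energy-saving buildings: the explicit curves
`y₁(t) = (1/λ)(√(A₁² − λ²t²) − √(A₁² − λ²a²))` and
`y₂(t) = −(1/λ)(√(A₂² − λ²t²) − √(A₂² − λ²a²))` vanish at `±a` and satisfy on `(−a,a)`
the Euler–Lagrange system `−A₁ ÿ₁/(1+ẏ₁²)^{3/2} − λ = 0`, `−A₂ ÿ₂/(1+ẏ₂²)^{3/2} + λ = 0`. -/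
theorem stmt18 (a A₁ A₂ lam : ℝ) (ha : 0 < a)
    (hA₁ : 0 < A₁) (hA₂ : 0 < A₂) (hlam : 0 < lam)
    (h1 : lam * a < A₁) (h2 : lam * a < A₂)
    (y₁ y₂ : ℝ → ℝ)
    (hy₁ : ∀ t : ℝ, y₁ t =
      (1 / lam) * (Real.sqrt (A₁ ^ 2 - lam ^ 2 * t ^ 2) - Real.sqrt (A₁ ^ 2 - lam ^ 2 * a ^ 2)))
    (hy₂ : ∀ t : ℝ, y₂ t =
      -(1 / lam) * (Real.sqrt (A₂ ^ 2 - lam ^ 2 * t ^ 2) - Real.sqrt (A₂ ^ 2 - lam ^ 2 * a ^ 2))) :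
    y₁ (-a) = 0 ∧ y₁ a = 0 ∧ y₂ (-a) = 0 ∧ y₂ a = 0 ∧
    ∀ t ∈ Set.Ioo (-a) a,
      (-A₁ * deriv (deriv y₁) t / (1 + (deriv y₁ t) ^ 2) ^ ((3:ℝ)/2) - lam = 0) ∧
      (-A₂ * deriv (deriv y₂) t / (1 + (deriv y₂ t) ^ 2) ^ ((3:ℝ)/2) + lam = 0) :=
  stmt18_general a A₁ A₂ lam hlam h1 h2 y₁ y₂ hy₁ hy₂
end

section
/- Let y_ζ minimize the scalarized functional J_ζ(y) = ∫_a^b L_ζ(t,y,ẏ) dt over 𝒳 = {y ∈ C¹([a,b];ℝⁿ) : y(a)=A, y(b)=B}, where L_ζ = ζ·L with L of class C¹. Let M ⊆ 𝒳 be an infimizer of J̄ containing y_ζ, and define φ_{ζ,M}(v) = inf_{y∈M} ζ·J(y+v) for v ∈ C¹₀([a,b];ℝⁿ). Then φ_{ζ,M} is Fréchet differentiable at 0 with φ'_{ζ,M}(0)(v) = ∫_a^b [D_y L_ζ(t, y_ζ, ẏ_ζ)·v + D_p L_ζ(t, y_ζ, ẏ_ζ)·v̇] dt, and this derivative is identically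 zero. -/
/-!
Since `y_ζ` minimizes `J_ζ` over `𝒳 ⊇ M + X0`, the inf-translation is squeezed:
`J_ζ(y_ζ) ≤ φ(v) ≤ J_ζ(y_ζ + v)`, with equality at `v = 0`. A first-order Taylor expansion of the
`C¹` Lagrangian, uniform along the compact curve `t ↦ (t, y_ζ t, ẏ_ζ t)`, shows that
`v ↦ J_ζ(y_ζ + v)` is Fréchet differentiable at `0` in the `C¹` norm with derivative `D`. As this
map is minimal at `0` and `D` is homogeneous, `D` vanishes on `X0`; then the squeeze shows that `φ`
is differentiable at `0` with the same derivative.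
-/

open Pointwise MeasureTheory

open Set Interval

noncomputable section

section SupNorm
variable {α E : Type*} [NormedAddCommGroup E]

def supNormOn (s : Set α) (f : α → E) : ℝ := sSup {r | ∃ t ∈ s, r = ‖f t‖}

theorem supNormOn_nonneg (s : Set α) (f : α → E) : 0 ≤ supNormOn s f :=
  Real.sSup_nonneg (by rintro _ ⟨t, -, rfl⟩; exact norm_nonneg _)

theorem norm_le_supNormOn [TopologicalSpace α] {s : Set α} {f : α → E} (hs : IsCompact s)
    (hf : ContinuousOn f s) {t : α} (ht : t ∈ s) : ‖f t‖ ≤ supNormOn s f := by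
  refine le_csSup ?_ ⟨t, ht, rfl⟩
  convert (hs.image_of_continuousOn hf.norm).bddAbove using 2
  ext r
  exact ⟨fun ⟨t, ht, h⟩ => ⟨t, ht, h.symm⟩, fun ⟨t, ht, h⟩ => ⟨t, ht, h.symm⟩⟩

theorem supNormOn_smul [NormedSpace ℝ E] (s : Set α) (f : α → E) (c : ℝ) :
    supNormOn s (c • f) = |c| * supNormOn s f := by
  rw [supNormOn, supNormOn, ← smul_eq_mul, ← Real.sSup_smul_of_nonneg (abs_nonneg c)]
  congr 1
  ext r
  simp [Set.mem_smul_set, norm_smul, eq_comm]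

end SupNorm

section C1Norm
variable {E : Type*} [NormedAddCommGroup E] [NormedSpace ℝ E]

def c1Norm (a b : ℝ) (v : ℝ → E) : ℝ := supNormOn (Icc a b) v + supNormOn (Icc a b) (deriv v)

variable {a b : ℝ} {v : ℝ → E}

theorem norm_le_c1Norm (hv : ContDiff ℝ 1 v) {t : ℝ} (ht : t ∈ Icc a b) : ‖v t‖ ≤ c1Norm a b v :=
  le_add_of_le_of_nonneg (norm_le_supNormOn isCompact_Icc hv.continuous.continuousOn ht)
    (supNormOn_nonneg _ _)

theorem norm_deriv_le_c1Norm (hv : ContDiff ℝ 1 v) {t : ℝ} (ht : t ∈ Icc a b) :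
    ‖deriv v t‖ ≤ c1Norm a b v :=
  le_add_of_nonneg_of_le (supNormOn_nonneg _ _)
    (norm_le_supNormOn isCompact_Icc (hv.continuous_deriv le_rfl).continuousOn ht)

theorem c1Norm_smul (c : ℝ) (v : ℝ → E) : c1Norm a b (c • v) = |c| * c1Norm a b v := by
  have hderiv : deriv (c • v) = c • deriv v := funext fun _ => deriv_const_smul_field c v
  rw [c1Norm, c1Norm, hderiv, supNormOn_smul, supNormOn_smul, mul_add]

end C1Norm

section FrechetAtZero
variable {V : Type*} [AddCommGroup V]

/-- Fréchet differentiability at `0` with derivative `D`, tested only in the directions of `S`,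
with the gauge `N` in place of a norm. -/
def HasFrechetDerivAtZero (S : Set V) (N f D : V → ℝ) : Prop :=
  ∀ ε > 0, ∃ δ > 0, ∀ v ∈ S, N v < δ → |f v - f 0 - D v| ≤ ε * N v

variable {S T : Set V} {N f φ D : V → ℝ}

theorem HasFrechetDerivAtZero.mono (h : HasFrechetDerivAtZero T N f D) (hST : S ⊆ T) :
    HasFrechetDerivAtZero S N f D := fun ε hε =>
  let ⟨δ, hδ, hδT⟩ := h ε hε
  ⟨δ, hδ, fun v hv => hδT v (hST hv)⟩

theorem IsMinOn.eq_zero_of_hasFrechetDerivAtZero [Module ℝ V] (hmin : IsMinOn f S 0)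
    (hf : HasFrechetDerivAtZero S N f D) (hS : ∀ v ∈ S, ∀ s : ℝ, s • v ∈ S)
    (hD : ∀ v ∈ S, ∀ s : ℝ, D (s • v) = s * D v) (hN : ∀ v ∈ S, ∀ s : ℝ, N (s • v) = |s| * N v)
    {v : V} (hv : v ∈ S) : D v = 0 := by
  have key : ∀ ε > 0, |D v| ≤ ε * N v := by
    intro ε hε
    obtain ⟨δ, hδ, h⟩ := hf ε hε
    set s := δ / (|N v| + 1)
    have hs : 0 < s := by positivity
    have hsN : s * N v < δ := calc
      s * N v ≤ s * |N v| := by gcongr; exact le_abs_self _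
      _ < s * (|N v| + 1) := by gcongr; linarith
      _ = δ := div_mul_cancel₀ _ (by positivity)
    have h_pos := h _ (hS v hv s) (by rwa [hN v hv, abs_of_pos hs])
    have h_neg := h _ (hS v hv (-s)) (by rwa [hN v hv, abs_neg, abs_of_pos hs])
    have m_pos : f 0 ≤ f (s • v) := hmin (hS v hv s)
    have m_neg : f 0 ≤ f ((-s) • v) := hmin (hS v hv (-s))
    rw [hD v hv, hN v hv, abs_of_pos hs] at h_pos
    rw [hD v hv, hN v hv, abs_neg, abs_of_pos hs] at h_neg
    rw [abs_le] at h_pos h_neg ⊢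
    constructor <;> nlinarith
  by_contra hne
  have hDpos : 0 < |D v| := abs_pos.2 hne
  have hNpos : 0 < N v := by linarith [key 1 one_pos]
  have hhalf := key (|D v| / (2 * N v)) (by positivity)
  rw [div_mul_eq_mul_div, mul_div_mul_right _ _ hNpos.ne'] at hhalf
  linarith

theorem HasFrechetDerivAtZero.of_squeeze (hf : HasFrechetDerivAtZero S N f D)
    (hD : ∀ v ∈ S, D v = 0) (hsq : ∀ v ∈ S, f 0 ≤ φ v ∧ φ v ≤ f v) (hφ0 : φ 0 = f 0) :
    HasFrechetDerivAtZero S N φ D := by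
  intro ε hε
  obtain ⟨δ, hδ, hfδ⟩ := hf ε hε
  refine ⟨δ, hδ, fun v hv hvδ => ?_⟩
  have hfv := hfδ v hv hvδ
  obtain ⟨hlow, hup⟩ := hsq v hv
  rw [hD v hv, sub_zero] at hfv ⊢
  rw [hφ0, abs_of_nonneg (by linarith)]
  exact (sub_le_sub_right hup _).trans ((le_abs_self _).trans hfv)

end FrechetAtZero

theorem fderiv_partial_add_fderiv_partial {E G : Type*} [NormedAddCommGroup E] [NormedSpace ℝ E]
    [NormedAddCommGroup G] [NormedSpace ℝ G] {F : ℝ × E × E → G} {t : ℝ} {y p : E}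
    (hF : DifferentiableAt ℝ F (t, y, p)) (u w : E) :
    fderiv ℝ (fun y' => F (t, y', p)) y u + fderiv ℝ (fun p' => F (t, y, p')) p w =
      fderiv ℝ F (t, y, p) (0, u, w) := by
  have hy : HasFDerivAt (fun y' => F (t, y', p)) _ y := hF.hasFDerivAt.comp y
    ((hasFDerivAt_prodMk_right t (y, p)).comp y (hasFDerivAt_prodMk_left (𝕜 := ℝ) y p))
  have hp : HasFDerivAt (fun p' => F (t, y, p')) _ p := hF.hasFDerivAt.comp p
    ((hasFDerivAt_prodMk_right t (y, p)).comp p (hasFDerivAt_prodMk_right (𝕜 := ℝ) y p))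
  simp [hy.fderiv, hp.fderiv, ← map_add]

theorem IsCompact.exists_forall_norm_sub_sub_fderiv_le {X Y : Type*} [NormedAddCommGroup X]
    [NormedSpace ℝ X] [NormedAddCommGroup Y] [NormedSpace ℝ Y] {F : X → Y} (hF : ContDiff ℝ 1 F)
    {K : Set X} (hK : IsCompact K) {ε : ℝ} (hε : 0 < ε) :
    ∃ δ > 0, ∀ x ∈ K, ∀ h : X, ‖h‖ < δ → ‖F (x + h) - F x - fderiv ℝ F x h‖ ≤ ε * ‖h‖ := by
  obtain ⟨δ, hδ, hclose⟩ := Metric.mem_uniformity_dist.1 <|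
    hK.uniformContinuousAt_of_continuousAt (fderiv ℝ F)
      (fun x _ => (hF.continuous_fderiv one_ne_zero).continuousAt) (Metric.dist_mem_uniformity hε)
  refine ⟨δ, hδ, fun x hx h hh => ?_⟩
  have hbound : ∀ z ∈ Metric.ball x δ, ‖fderiv ℝ F z - fderiv ℝ F x‖ ≤ ε := fun z hz => by
    rw [← dist_eq_norm, dist_comm]
    exact (hclose (Metric.mem_ball'.1 hz) hx).le
  simpa using (convex_ball x δ).norm_image_sub_le_of_norm_fderiv_le'
    (fun z _ => (hF.differentiable one_ne_zero) z) hbound (Metric.mem_ball_self hδ)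
    (y := x + h) (by simpa using hh)

theorem exists_norm_integral_sub_sub_fderiv_le {E G : Type*} [NormedAddCommGroup E]
    [NormedSpace ℝ E] [NormedAddCommGroup G] [NormedSpace ℝ G] {F : ℝ × E × E → G} (hF : ContDiff ℝ 1 F)
    {a b : ℝ} (hab : a ≤ b) {y z : ℝ → E} (hy : Continuous y) (hz : Continuous z) {ε : ℝ}
    (hε : 0 < ε) :
    ∃ δ > 0, ∀ v w : ℝ → E, Continuous v → Continuous w → ∀ N < δ,
      (∀ t ∈ Icc a b, ‖v t‖ ≤ N ∧ ‖w t‖ ≤ N) →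
      ‖(∫ t in a..b, F (t, y t + v t, z t + w t)) - (∫ t in a..b, F (t, y t, z t)) -
        ∫ t in a..b, fderiv ℝ F (t, y t, z t) (0, v t, w t)‖ ≤ ε * N := by
  set γ : ℝ → ℝ × E × E := fun t => (t, y t, z t)
  have hγ : Continuous γ := continuous_id.prodMk (hy.prodMk hz)
  set ε' := ε / (b - a + 1)
  obtain ⟨δ, hδ, hT⟩ :=
    ((isCompact_Icc (a := a) (b := b)).image hγ).exists_forall_norm_sub_sub_fderiv_le hF
      (ε := ε') (by positivity)
  refine ⟨δ, hδ, fun v w hv hw N hNδ hvw => ?_⟩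
  have hN : 0 ≤ N := (norm_nonneg _).trans (hvw a ⟨le_rfl, hab⟩).1
  have hpt : ∀ t ∈ Ι a b, ‖F (t, y t + v t, z t + w t) - F (γ t) -
      fderiv ℝ F (γ t) (0, v t, w t)‖ ≤ ε' * N := by
    intro t ht
    have ht : t ∈ Icc a b := Ioc_subset_Icc_self (uIoc_of_le hab ▸ ht)
    have hh : ‖((0 : ℝ), v t, w t)‖ ≤ N := by
      simpa [Prod.norm_def] using hvw t ht
    calc _ = ‖F (γ t + (0, v t, w t)) - F (γ t) - fderiv ℝ F (γ t) (0, v t, w t)‖ := by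
          simp [γ]
      _ ≤ ε' * ‖((0 : ℝ), v t, w t)‖ := hT _ (mem_image_of_mem γ ht) _ (hh.trans_lt hNδ)
      _ ≤ ε' * N := by gcongr
  have hint_var : IntervalIntegrable (fun t => F (t, y t + v t, z t + w t)) volume a b :=
    (hF.continuous.comp (continuous_id.prodMk ((hy.add hv).prodMk (hz.add hw)))).intervalIntegrable
      a b
  have hint_base : IntervalIntegrable (fun t => F (γ t)) volume a b :=
    (hF.continuous.comp hγ).intervalIntegrable a b
  have hint_lin : IntervalIntegrable (fun t => fderiv ℝ F (γ t) (0, v t, w t)) volume a b :=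
    (((hF.continuous_fderiv one_ne_zero).comp hγ).clm_apply
      (continuous_const.prodMk (hv.prodMk hw))).intervalIntegrable a b
  rw [← intervalIntegral.integral_sub hint_var hint_base,
    ← intervalIntegral.integral_sub (hint_var.sub hint_base) hint_lin]
  have hratio : (b - a) / (b - a + 1) ≤ 1 := (div_le_one (by linarith)).2 (by linarith)
  calc _ ≤ ε' * N * |b - a| := intervalIntegral.norm_integral_le_of_norm_le_const hpt
    _ = ε * N * ((b - a) / (b - a + 1)) := by rw [abs_of_nonneg (by linarith)]; ring
    _ ≤ ε * N := mul_le_of_le_one_right (by positivity) hratio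

theorem inner_intervalIntegral {H : Type*} [NormedAddCommGroup H] [InnerProductSpace ℝ H]
    [CompleteSpace H] (ζ : H) {f : ℝ → H} {a b : ℝ} (hf : IntervalIntegrable f volume a b) :
    inner ℝ ζ (∫ t in a..b, f t) = ∫ t in a..b, inner ℝ ζ (f t) :=
  ((innerSL ℝ ζ).intervalIntegral_comp_comm hf).symm

theorem hasFrechetDerivAtZero_inner_integral {E H : Type*} [NormedAddCommGroup E]
    [NormedSpace ℝ E] [NormedAddCommGroup H] [InnerProductSpace ℝ H] [CompleteSpace H]
    {L : ℝ → E → E → H} (hL : ContDiff ℝ 1 fun x : ℝ × E × E => L x.1 x.2.1 x.2.2) (ζ : H)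
    {a b : ℝ} (hab : a ≤ b) {y : ℝ → E} (hy : ContDiff ℝ 1 y) :
    HasFrechetDerivAtZero {v | ContDiff ℝ 1 v} (c1Norm a b)
      (fun v => inner ℝ ζ (∫ t in a..b, L t ((y + v) t) (deriv (y + v) t)))
      (fun v => ∫ t in a..b, (fderiv ℝ (fun y' => inner ℝ ζ (L t y' (deriv y t))) (y t) (v t) +
          fderiv ℝ (fun p' => inner ℝ ζ (L t (y t) p')) (deriv y t) (deriv v t))) := by
  set F : ℝ × E × E → ℝ := fun x => inner ℝ ζ (L x.1 x.2.1 x.2.2)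
  have hF : ContDiff ℝ 1 F := contDiff_const.inner ℝ hL
  have hinner : ∀ u : ℝ → E, ContDiff ℝ 1 u →
      inner ℝ ζ (∫ t in a..b, L t (u t) (deriv u t)) = ∫ t in a..b, F (t, u t, deriv u t) :=
    fun u hu => inner_intervalIntegral ζ <| (hL.continuous.comp <| continuous_id.prodMk <|
      hu.continuous.prodMk (hu.continuous_deriv le_rfl)).intervalIntegrable a b
  intro ε hε
  obtain ⟨δ, hδ, h⟩ := exists_norm_integral_sub_sub_fderiv_le hF hab hy.continuous
    (hy.continuous_deriv le_rfl) hε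
  refine ⟨δ, hδ, fun v (hv : ContDiff ℝ 1 v) hvδ => ?_⟩
  have hderiv : deriv (y + v) = deriv y + deriv v :=
    funext fun t => deriv_add (hy.differentiable one_ne_zero t) (hv.differentiable one_ne_zero t)
  have hpartial : ∀ t, fderiv ℝ (fun y' => inner ℝ ζ (L t y' (deriv y t))) (y t) (v t) +
      fderiv ℝ (fun p' => inner ℝ ζ (L t (y t) p')) (deriv y t) (deriv v t) =
      fderiv ℝ F (t, y t, deriv y t) (0, v t, deriv v t) := fun t =>
    fderiv_partial_add_fderiv_partial ((hF.differentiable one_ne_zero) _) _ _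
  simp only [add_zero]
  rw [hinner (y + v) (hy.add hv), hinner y hy, hderiv, ← Real.norm_eq_abs]
  simp only [hpartial, Pi.add_apply]
  exact h v (deriv v) hv.continuous (hv.continuous_deriv le_rfl) _ hvδ fun t ht =>
    ⟨norm_le_c1Norm hv ht, norm_deriv_le_c1Norm hv ht⟩

end

theorem stmt19_general {n d : ℕ} (a b : ℝ) (hab : a < b)
    (A B : EuclideanSpace ℝ (Fin n))
    (L : ℝ → EuclideanSpace ℝ (Fin n) → EuclideanSpace ℝ (Fin n) → EuclideanSpace ℝ (Fin d))
    (hL : ContDiff ℝ 1 (fun x : ℝ × EuclideanSpace ℝ (Fin n) × EuclideanSpace ℝ (Fin n) =>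
      L x.1 x.2.1 x.2.2))
    (ζ : EuclideanSpace ℝ (Fin d))
    -- the admissible arcs 𝒳 and the space of C¹ variations vanishing at the endpoints
    (𝒳 X0 : Set (ℝ → EuclideanSpace ℝ (Fin n)))
    (h𝒳 : 𝒳 = {y | ContDiff ℝ 1 y ∧ y a = A ∧ y b = B})
    (hX0 : X0 = {v | ContDiff ℝ 1 v ∧ v a = 0 ∧ v b = 0})
    -- the vector functional J, its extension scalarization J_ζ
    (J : (ℝ → EuclideanSpace ℝ (Fin n)) → EuclideanSpace ℝ (Fin d))
    (hJ : ∀ y, J y = ∫ t in a..b, L t (y t) (deriv y t))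
    (Jζ : (ℝ → EuclideanSpace ℝ (Fin n)) → ℝ)
    (hJζ : ∀ y, Jζ y = (inner ℝ ζ (J y) : ℝ))
    -- M is an infimizer containing a ζ-solution y_ζ
    (M : Set (ℝ → EuclideanSpace ℝ (Fin n))) (hM : M ⊆ 𝒳)
    (yζ : ℝ → EuclideanSpace ℝ (Fin n)) (hyζM : yζ ∈ M)
    (hyζmin : ∀ y ∈ 𝒳, Jζ yζ ≤ Jζ y)
    -- the scalarized inf-translation φ_{ζ,M}, the C¹ norm and the candidate derivative D
    (φ : (ℝ → EuclideanSpace ℝ (Fin n)) → ℝ)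
    (hφ : ∀ v, φ v = sInf {r : ℝ | ∃ y ∈ M, r = Jζ (y + v)})
    (normC1 : (ℝ → EuclideanSpace ℝ (Fin n)) → ℝ)
    (hnormC1 : ∀ v, normC1 v = sSup {r : ℝ | ∃ t ∈ Set.Icc a b, r = ‖v t‖} +
      sSup {r : ℝ | ∃ t ∈ Set.Icc a b, r = ‖deriv v t‖})
    (D : (ℝ → EuclideanSpace ℝ (Fin n)) → ℝ)
    (hD : ∀ v, D v = ∫ t in a..b,
      (fderiv ℝ (fun y' => (inner ℝ ζ (L t y' (deriv yζ t)) : ℝ)) (yζ t) (v t) +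
        fderiv ℝ (fun p' => (inner ℝ ζ (L t (yζ t) p') : ℝ)) (deriv yζ t) (deriv v t))) :
    (∀ ε > 0, ∃ δ > 0, ∀ v ∈ X0, normC1 v < δ →
      |φ v - φ 0 - D v| ≤ ε * normC1 v) ∧
    (∀ v ∈ X0, D v = 0) := by
  obtain rfl : normC1 = c1Norm a b := funext hnormC1
  obtain ⟨hyζ, -, -⟩ := h𝒳 ▸ hM hyζM
  have hadm : ∀ y ∈ M, ∀ v ∈ X0, y + v ∈ 𝒳 := by
    intro y hy v hv
    obtain ⟨hy, hya, hyb⟩ := h𝒳 ▸ hM hy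
    obtain ⟨hv, hva, hvb⟩ := hX0 ▸ hv
    exact h𝒳 ▸ ⟨hy.add hv, by simp [hya, hva], by simp [hyb, hvb]⟩
  have hsmul : ∀ v ∈ X0, ∀ s : ℝ, s • v ∈ X0 := by
    intro v hv s
    obtain ⟨hv, hva, hvb⟩ := hX0 ▸ hv
    exact hX0 ▸ ⟨hv.const_smul s, by simp [hva], by simp [hvb]⟩
  have hDsmul : ∀ v ∈ X0, ∀ s : ℝ, D (s • v) = s * D v := fun v _ s => by
    simp only [hD, deriv_const_smul_field, Pi.smul_apply, map_smul, smul_eq_mul, ← mul_add,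
      intervalIntegral.integral_const_mul]
  have hJζ' : HasFrechetDerivAtZero X0 (c1Norm a b) (fun v => Jζ (yζ + v)) D := by
    rw [show D = _ from funext hD]
    simp only [hJζ, hJ]
    exact (hasFrechetDerivAtZero_inner_integral hL ζ hab.le hyζ).mono fun v hv => (hX0 ▸ hv).1
  have hmin : IsMinOn (fun v => Jζ (yζ + v)) X0 0 :=
    isMinOn_iff.2 fun v hv => by simpa using hyζmin _ (hadm yζ hyζM v hv)
  have hD0 : ∀ v ∈ X0, D v = 0 := fun v =>
    hmin.eq_zero_of_hasFrechetDerivAtZero hJζ' hsmul hDsmul fun v _ s => c1Norm_smul s v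
  have hsq : ∀ v ∈ X0, Jζ (yζ + 0) ≤ φ v ∧ φ v ≤ Jζ (yζ + v) := fun v hv => by
    have hbound : ∀ y ∈ M, Jζ (yζ + 0) ≤ Jζ (y + v) := fun y hy => by
      simpa using hyζmin _ (hadm y hy v hv)
    rw [hφ]
    exact ⟨le_csInf ⟨_, yζ, hyζM, rfl⟩ (by rintro _ ⟨y, hy, rfl⟩; exact hbound y hy),
      csInf_le ⟨_, by rintro _ ⟨y, hy, rfl⟩; exact hbound y hy⟩ ⟨yζ, hyζM, rfl⟩⟩
  have hφ0 : φ 0 = Jζ (yζ + 0) :=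
    have h := hsq 0 (hX0 ▸ ⟨contDiff_const, rfl, rfl⟩)
    le_antisymm h.2 h.1
  exact ⟨hJζ'.of_squeeze hD0 hsq hφ0, hD0⟩

/-- Proposition 3.1 and its corollary: if `M` is an infimizer of `J̄`
containing a `ζ`-solution `y_ζ`, then `φ_{ζ,M}(v) = inf_{y∈M} ζ·J(y+v)` is Fréchet
differentiable at `0` (w.r.t. the `C¹` norm on `C¹₀([a,b];ℝⁿ)`), its derivative is
`v ↦ ∫_a^b [D_y L_ζ(t,y_ζ,ẏ_ζ)·v + D_p L_ζ(t,y_ζ,ẏ_ζ)·v̇] dt`, and this derivative is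
identically zero. -/
theorem stmt19 {n d : ℕ} (a b : ℝ) (hab : a < b)
    (A B : EuclideanSpace ℝ (Fin n))
    (L : ℝ → EuclideanSpace ℝ (Fin n) → EuclideanSpace ℝ (Fin n) → EuclideanSpace ℝ (Fin d))
    (hL : ContDiff ℝ 1 (fun x : ℝ × EuclideanSpace ℝ (Fin n) × EuclideanSpace ℝ (Fin n) =>
      L x.1 x.2.1 x.2.2))
    (C : Set (EuclideanSpace ℝ (Fin d)))
    (hCne : C.Nonempty) (hCclosed : IsClosed C) (hCconv : Convex ℝ C)
    (hCcone : ∀ c ∈ C, ∀ s : ℝ, 0 ≤ s → s • c ∈ C)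
    (hCproper : C ≠ Set.univ)
    (ζ : EuclideanSpace ℝ (Fin d))
    (hζC : ∀ c ∈ C, 0 ≤ (inner ℝ ζ c : ℝ)) (hζ0 : ζ ≠ 0)
    -- the admissible arcs 𝒳 and the space of C¹ variations vanishing at the endpoints
    (𝒳 X0 : Set (ℝ → EuclideanSpace ℝ (Fin n)))
    (h𝒳 : 𝒳 = {y | ContDiff ℝ 1 y ∧ y a = A ∧ y b = B})
    (hX0 : X0 = {v | ContDiff ℝ 1 v ∧ v a = 0 ∧ v b = 0})
    -- the vector functional J, its extension scalarization J_ζ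
    (J : (ℝ → EuclideanSpace ℝ (Fin n)) → EuclideanSpace ℝ (Fin d))
    (hJ : ∀ y, J y = ∫ t in a..b, L t (y t) (deriv y t))
    (Jζ : (ℝ → EuclideanSpace ℝ (Fin n)) → ℝ)
    (hJζ : ∀ y, Jζ y = (inner ℝ ζ (J y) : ℝ))
    -- M is an infimizer containing a ζ-solution y_ζ
    (M : Set (ℝ → EuclideanSpace ℝ (Fin n))) (hM : M ⊆ 𝒳)
    (hinf : closure (⋃ y ∈ M, ({J y} + C)) = closure (⋃ y ∈ 𝒳, ({J y} + C)))
    (yζ : ℝ → EuclideanSpace ℝ (Fin n)) (hyζM : yζ ∈ M)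
    (hyζmin : ∀ y ∈ 𝒳, Jζ yζ ≤ Jζ y)
    -- the scalarized inf-translation φ_{ζ,M}, the C¹ norm and the candidate derivative D
    (φ : (ℝ → EuclideanSpace ℝ (Fin n)) → ℝ)
    (hφ : ∀ v, φ v = sInf {r : ℝ | ∃ y ∈ M, r = Jζ (y + v)})
    (normC1 : (ℝ → EuclideanSpace ℝ (Fin n)) → ℝ)
    (hnormC1 : ∀ v, normC1 v = sSup {r : ℝ | ∃ t ∈ Set.Icc a b, r = ‖v t‖} +
      sSup {r : ℝ | ∃ t ∈ Set.Icc a b, r = ‖deriv v t‖})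
    (D : (ℝ → EuclideanSpace ℝ (Fin n)) → ℝ)
    (hD : ∀ v, D v = ∫ t in a..b,
      (fderiv ℝ (fun y' => (inner ℝ ζ (L t y' (deriv yζ t)) : ℝ)) (yζ t) (v t) +
        fderiv ℝ (fun p' => (inner ℝ ζ (L t (yζ t) p') : ℝ)) (deriv yζ t) (deriv v t))) :
    (∀ ε > 0, ∃ δ > 0, ∀ v ∈ X0, normC1 v < δ →
      |φ v - φ 0 - D v| ≤ ε * normC1 v) ∧
    (∀ v ∈ X0, D v = 0) :=
  stmt19_general a b hab A B L hL ζ 𝒳 X0 h𝒳 hX0 J hJ Jζ hJζ M hM yζ hyζM hyζmin φ hφ normC1 hnormC1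
    D hD
end
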